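/- In the syntactic category of the theory Glob, for every natural number n and every context Γ, the map sending a substitution γ : Γ → S^{n-1} to the type U_n[γ] is a natural bijection between substitutions from Γ to the sphere context S^{n-1} and derivable types of dimension n−1 in Γ. -/
import Mathlib


namespace Glob

/-- Types of the theory `Glob`: `Obj` and `Hom A t u`, where terms are just variables
(represented as natural numbers). -/
inductive Ty : Type
  | obj : Ty
  | hom : Ty → ℕ → ℕ → Ty
deriving DecidableEq

/-- Contexts: lists of typed variables (most recently declared variable first). -/
abbrev Ctx := List (ℕ × Ty)

/-- Substitutions: lists of variable/term assignments (most recent first). -/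
abbrev Sub := List (ℕ × ℕ)

/-- Action of a substitution on a term (a variable). -/
def lookupSub (x : ℕ) : Sub → ℕ
  | [] => x
  | (y, u) :: γ => if x = y then u else lookupSub x γ

/-- Action of a substitution on a type. -/
def Ty.sub : Ty → Sub → Ty
  | .obj, _ => .obj
  | .hom A t u, γ => .hom (A.sub γ) (lookupSub t γ) (lookupSub u γ)

/-- Composition of substitutions. -/
def Sub.comp : Sub → Sub → Sub
  | [], _ => []
  | (x, t) :: δ, γ => (x, lookupSub t γ) :: Sub.comp δ γ

/-- The identity substitution of a context. -/
def idSub (Γ : Ctx) : Sub := Γ.map (fun p => (p.1, p.1))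

/-- The set of variables declared in a context. -/
def Ctx.domvars (Γ : Ctx) : Set ℕ := {x | ∃ A, (x, A) ∈ Γ}

mutual
  /-- Derivability of contexts in the theory `Glob`. -/
  inductive CtxDer : Ctx → Prop
    | nil : CtxDer []
    | ext {Γ : Ctx} {A : Ty} {x : ℕ} :
        CtxDer Γ → TyDer Γ A → x ∉ Ctx.domvars Γ → CtxDer ((x, A) :: Γ)
  /-- Derivability of types. -/
  inductive TyDer : Ctx → Ty → Prop
    | obj {Γ : Ctx} : CtxDer Γ → TyDer Γ .obj
    | hom {Γ : Ctx} {A : Ty} {t u : ℕ} :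
        TyDer Γ A → TmDer Γ t A → TmDer Γ u A → TyDer Γ (.hom A t u)
  /-- Derivability of terms. -/
  inductive TmDer : Ctx → ℕ → Ty → Prop
    | var {Γ : Ctx} {x : ℕ} {A : Ty} : CtxDer Γ → (x, A) ∈ Γ → TmDer Γ x A
  /-- Derivability of substitutions. -/
  inductive SubDer : Ctx → Sub → Ctx → Prop
    | nil {Δ : Ctx} : CtxDer Δ → SubDer Δ [] []
    | cons {Δ : Ctx} {γ : Sub} {Γ : Ctx} {x : ℕ} {A : Ty} {t : ℕ} :
        SubDer Δ γ Γ → TyDer Γ A → x ∉ Ctx.domvars Γ → TmDer Δ t (A.sub γ) →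
        SubDer Δ ((x, t) :: γ) ((x, A) :: Γ)
end

/-- The dimension of a type, shifted so that `dimN Obj = 0`
(the paper's dimension is `dimN - 1`). -/
def Ty.dimN : Ty → ℕ
  | .obj => 0
  | .hom A _ _ => A.dimN + 1

/-- The types `U_n` of the disk and sphere contexts. -/
def U : ℕ → Ty
  | 0 => .obj
  | n + 1 => .hom (U n) (2 * n) (2 * n + 1)

/-- The sphere contexts; `SphC n` is the context `S^{n-1}` of the paper
(so that `SphC 0` is the empty context `S^{-1}`). -/
def SphC : ℕ → Ctx
  | 0 => []
  | n + 1 => (2 * n + 1, U n) :: (2 * n, U n) :: SphC n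

/-- The disk contexts `D^n`. -/
def DiskC (n : ℕ) : Ctx := (2 * n, U n) :: SphC n

end Glob

namespace Glob

/-- The dimension of a type as in the paper: `dim Obj = -1`. -/
def Ty.dimZ (A : Ty) : ℤ := (A.dimN : ℤ) - 1

/-- Variables occurring in a type. -/
def Ty.vars : Ty → List ℕ
  | .obj => []
  | .hom A t u => t :: u :: A.vars

lemma lookup_ne {x y : ℕ} {t : ℕ} {γ : Sub} (h : x ≠ y) :
    lookupSub x ((y, t) :: γ) = lookupSub x γ := by
  simp [lookupSub, h]

lemma sub_not_var {A : Ty} {x t : ℕ} {γ : Sub} (h : x ∉ A.vars) :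
    A.sub ((x, t) :: γ) = A.sub γ := by
  induction A with
  | obj => rfl
  | hom B s u ih =>
    simp only [Ty.vars, List.mem_cons, not_or] at h
    simp [Ty.sub, ih h.2.2, lookup_ne (Ne.symm h.1), lookup_ne (Ne.symm h.2.1)]

lemma mem_domvars_cons {y x : ℕ} {A : Ty} {Γ : Ctx} :
    y ∈ Ctx.domvars ((x, A) :: Γ) ↔ y = x ∨ y ∈ Ctx.domvars Γ := by
  simp only [Ctx.domvars, Set.mem_setOf_eq, List.mem_cons, Prod.mk.injEq]
  constructor
  · rintro ⟨B, h | h⟩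
    · exact Or.inl h.1
    · exact Or.inr ⟨B, h⟩
  · rintro (rfl | ⟨B, h⟩)
    · exact ⟨A, Or.inl ⟨rfl, rfl⟩⟩
    · exact ⟨B, Or.inr h⟩

lemma mem_domvars_of_mem {x : ℕ} {A : Ty} {Γ : Ctx} (h : (x, A) ∈ Γ) :
    x ∈ Ctx.domvars Γ := ⟨A, h⟩

lemma vars_subset {Γ : Ctx} {A : Ty} (h : TyDer Γ A) :
    ∀ v ∈ A.vars, v ∈ Γ.domvars := by
  induction A with
  | obj => intro v hv; simp [Ty.vars] at hv
  | hom B t u ih =>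
    cases h with
    | hom hB ht hu =>
      intro v hv
      simp only [Ty.vars, List.mem_cons] at hv
      rcases hv with rfl | rfl | hv
      · cases ht with | var _ hm => exact mem_domvars_of_mem hm
      · cases hu with | var _ hm => exact mem_domvars_of_mem hm
      · exact ih hB v hv

lemma mem_vars_subset {Γ : Ctx} {t : ℕ} {A : Ty} (hΓ : CtxDer Γ) (h : (t, A) ∈ Γ) :
    ∀ v ∈ A.vars, v ∈ Γ.domvars := by
  induction Γ with
  | nil => simp at h
  | cons p Γ₀ ih =>
    obtain ⟨x, B⟩ := p
    cases hΓ with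
    | ext hΓ₀ hB hx =>
      intro v hv
      rcases List.mem_cons.mp h with h' | h'
      · injection h' with h1 h2
        exact mem_domvars_cons.mpr (Or.inr (vars_subset hB v (h2 ▸ hv)))
      · exact mem_domvars_cons.mpr (Or.inr (ih hΓ₀ h' v hv))

lemma subDer_src {Δ : Ctx} {γ : Sub} {Γ : Ctx} (h : SubDer Δ γ Γ) : CtxDer Δ := by
  induction γ generalizing Γ with
  | nil => cases h with | nil h => exact h
  | cons p γ₀ ih =>
    cases h with
    | cons hγ₀ _ _ _ => exact ih hγ₀

lemma subDer_tgt {Δ : Ctx} {γ : Sub} {Γ : Ctx} (h : SubDer Δ γ Γ) : CtxDer Γ := by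
  induction γ generalizing Γ with
  | nil => cases h; exact CtxDer.nil
  | cons p γ₀ ih =>
    cases h with
    | cons hγ₀ hA hx _ => exact CtxDer.ext (ih hγ₀) hA hx

lemma tm_sub {Δ : Ctx} {γ : Sub} {Γ : Ctx} {t : ℕ} {A : Ty}
    (hγ : SubDer Δ γ Γ) (ht : TmDer Γ t A) :
    TmDer Δ (lookupSub t γ) (A.sub γ) := by
  induction γ generalizing Γ with
  | nil =>
    cases hγ
    cases ht with | var _ hm => simp at hm
  | cons p γ₀ ih =>
    obtain ⟨x, s⟩ := p
    cases hγ with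
    | @cons _ _ Γ₀ _ A' _ hγ₀ hA hx hs =>
      cases ht with
      | var hΓ hm =>
        rcases List.mem_cons.mp hm with h | h
        · injection h with h1 h2
          have hnv : x ∉ A.vars := fun hv => hx (vars_subset hA _ (h2 ▸ hv))
          rw [show lookupSub t ((x, s) :: γ₀) = s from by simp [lookupSub, h1],
            sub_not_var hnv, h2]
          exact hs
        · have htd : t ∈ Γ₀.domvars := mem_domvars_of_mem h
          have hne : t ≠ x := fun he => hx (he ▸ htd)
          have hΓ₀ : CtxDer Γ₀ := subDer_tgt hγ₀
          have hnv : x ∉ A.vars := fun hv => hx (mem_vars_subset hΓ₀ h x hv)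
          rw [lookup_ne hne, sub_not_var hnv]
          exact ih hγ₀ (TmDer.var hΓ₀ h)

lemma ty_sub {Δ : Ctx} {γ : Sub} {Γ : Ctx} {A : Ty}
    (hγ : SubDer Δ γ Γ) (hA : TyDer Γ A) : TyDer Δ (A.sub γ) := by
  induction A with
  | obj => exact TyDer.obj (subDer_src hγ)
  | hom B t u ih =>
    cases hA with
    | hom hB ht hu =>
      exact TyDer.hom (ih hB) (tm_sub hγ ht) (tm_sub hγ hu)

lemma tm_weak {Γ : Ctx} {x : ℕ} {B : Ty} {t : ℕ} {A : Ty}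
    (h : TmDer Γ t A) (hc : CtxDer ((x, B) :: Γ)) : TmDer ((x, B) :: Γ) t A := by
  cases h with | var _ hm => exact TmDer.var hc (List.mem_cons_of_mem _ hm)

lemma ty_weak {Γ : Ctx} {x : ℕ} {B : Ty} {A : Ty}
    (h : TyDer Γ A) (hc : CtxDer ((x, B) :: Γ)) : TyDer ((x, B) :: Γ) A := by
  induction A with
  | obj => exact TyDer.obj hc
  | hom C t u ih =>
    cases h with
    | hom hC ht hu => exact TyDer.hom (ih hC) (tm_weak ht hc) (tm_weak hu hc)

lemma mem_domvars_sphC {n x : ℕ} : x ∈ Ctx.domvars (SphC n) ↔ x < 2 * n := by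
  induction n generalizing x with
  | zero => simp [SphC, Ctx.domvars]
  | succ m ih =>
    simp only [SphC, mem_domvars_cons, ih]
    omega

lemma sphC_der (n : ℕ) : CtxDer (SphC n) ∧ TyDer (SphC n) (U n) := by
  induction n with
  | zero => exact ⟨CtxDer.nil, TyDer.obj CtxDer.nil⟩
  | succ m ih =>
    obtain ⟨hc, hT⟩ := ih
    have h1 : (2 * m : ℕ) ∉ Ctx.domvars (SphC m) := by
      rw [mem_domvars_sphC]; omega
    have hcd : CtxDer ((2 * m, U m) :: SphC m) := CtxDer.ext hc hT h1
    have h2 : (2 * m + 1 : ℕ) ∉ Ctx.domvars ((2 * m, U m) :: SphC m) := by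
      rw [mem_domvars_cons, mem_domvars_sphC]; omega
    have hcs : CtxDer (SphC (m + 1)) := CtxDer.ext hcd (ty_weak hT hcd) h2
    refine ⟨hcs, ?_⟩
    have hTw : TyDer (SphC (m + 1)) (U m) := ty_weak (ty_weak hT hcd) hcs
    refine TyDer.hom hTw ?_ ?_
    · exact TmDer.var hcs (by simp [SphC])
    · exact TmDer.var hcs (by simp [SphC])

lemma vars_U_lt {n x : ℕ} (h : x ∈ (U n).vars) : x < 2 * n :=
  mem_domvars_sphC.mp (vars_subset (sphC_der n).2 x h)

lemma dimN_sub (A : Ty) (γ : Sub) : (A.sub γ).dimN = A.dimN := by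
  induction A generalizing γ with
  | obj => rfl
  | hom B t u ih => simp [Ty.sub, Ty.dimN, ih]

lemma dimN_U (n : ℕ) : (U n).dimN = n := by
  induction n with
  | zero => rfl
  | succ m ih => simp [U, Ty.dimN, ih]

lemma comp_lookup {Δ : Ctx} {γ : Sub} {Γ : Ctx} (δ : Sub) (hγ : SubDer Δ γ Γ)
    {x : ℕ} (hx : x ∈ Γ.domvars) :
    lookupSub x (Sub.comp γ δ) = lookupSub (lookupSub x γ) δ := by
  induction γ generalizing Γ with
  | nil => cases hγ; simp [Ctx.domvars] at hx
  | cons p γ₀ ih =>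
    obtain ⟨y, t⟩ := p
    cases hγ with
    | cons hγ₀ hA hy _ =>
      rcases mem_domvars_cons.mp hx with rfl | hx'
      · simp [Sub.comp, lookupSub]
      · have hne : x ≠ y := fun he => hy (he ▸ hx')
        rw [Sub.comp, lookup_ne hne, lookup_ne hne]
        exact ih hγ₀ hx'

lemma sub_comp {Δ : Ctx} {γ : Sub} {Γ : Ctx} (δ : Sub) (hγ : SubDer Δ γ Γ)
    {A : Ty} (hv : ∀ x ∈ A.vars, x ∈ Γ.domvars) :
    (A.sub γ).sub δ = A.sub (Sub.comp γ δ) := by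
  induction A with
  | obj => rfl
  | hom B t u ih =>
    simp only [Ty.sub]
    rw [ih (fun x hx => hv x (by simp [Ty.vars, hx])),
        comp_lookup δ hγ (hv t (by simp [Ty.vars])),
        comp_lookup δ hγ (hv u (by simp [Ty.vars]))]


lemma inj_aux : ∀ (n : ℕ) {Γ : Ctx} {γ γ' : Sub}, SubDer Γ γ (SphC n) →
    SubDer Γ γ' (SphC n) → (U n).sub γ = (U n).sub γ' → γ = γ' := by
  intro n
  induction n with
  | zero =>
    intro Γ γ γ' hγ hγ' _
    cases hγ; cases hγ'; rfl
  | succ m ih =>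
    intro Γ γ γ' hγ hγ' he
    cases hγ with
    | cons hγ₁ _ _ hu =>
      rename_i u
      cases hγ₁ with
      | cons hγ₀ _ _ ht =>
        rename_i t
        cases hγ' with
        | cons hγ₁' _ _ hu' =>
          rename_i u'
          cases hγ₁' with
          | cons hγ₀' _ _ ht' =>
            rename_i t'
            have h1 : (2 * m : ℕ) ∉ (U m).vars := fun h => by
              have := vars_U_lt h; omega
            have h2 : (2 * m + 1 : ℕ) ∉ (U m).vars := fun h => by
              have := vars_U_lt h; omega
            rename_i γ₀ γ₀'
            have key : ∀ (a b : ℕ) (δ : Sub),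
                (U (m + 1)).sub ((2 * m + 1, b) :: (2 * m, a) :: δ) =
                  Ty.hom ((U m).sub δ) a b := by
              intro a b δ
              show Ty.hom _ _ _ = _
              rw [sub_not_var h2, sub_not_var h1,
                lookup_ne (by omega : (2 * m : ℕ) ≠ 2 * m + 1)]
              simp [lookupSub]
            rw [key, key] at he
            injection he with e1 e2 e3
            subst e2; subst e3
            rw [ih hγ₀ hγ₀' e1]

lemma surj_aux : ∀ (n : ℕ) {Γ : Ctx} {A : Ty}, CtxDer Γ → TyDer Γ A → A.dimN = n →
    ∃ γ : Sub, SubDer Γ γ (SphC n) ∧ (U n).sub γ = A := by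
  intro n
  induction n with
  | zero =>
    intro Γ A hΓ hA hd
    cases A with
    | obj => exact ⟨[], SubDer.nil hΓ, rfl⟩
    | hom => simp [Ty.dimN] at hd
  | succ m ih =>
    intro Γ A hΓ hA hd
    cases A with
    | obj => simp [Ty.dimN] at hd
    | hom B t u =>
      cases hA with
      | hom hB ht hu =>
        obtain ⟨γ₀, hγ₀, hsub⟩ := ih hΓ hB (by simpa [Ty.dimN] using hd)
        obtain ⟨hcs, hTs⟩ := sphC_der m
        have h1 : (2 * m : ℕ) ∉ Ctx.domvars (SphC m) := by
          rw [mem_domvars_sphC]; omega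
        have hcd : CtxDer ((2 * m, U m) :: SphC m) := CtxDer.ext hcs hTs h1
        have h2 : (2 * m + 1 : ℕ) ∉ Ctx.domvars ((2 * m, U m) :: SphC m) := by
          rw [mem_domvars_cons, mem_domvars_sphC]; omega
        have hv1 : (2 * m : ℕ) ∉ (U m).vars := fun h => by
          have := vars_U_lt h; omega
        have hv2 : (2 * m + 1 : ℕ) ∉ (U m).vars := fun h => by
          have := vars_U_lt h; omega
        refine ⟨(2 * m + 1, u) :: (2 * m, t) :: γ₀, ?_, ?_⟩
        · refine SubDer.cons (SubDer.cons hγ₀ hTs h1 (hsub ▸ ht))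
            (ty_weak hTs hcd) h2 ?_
          rw [sub_not_var hv1, hsub]
          exact hu
        · show Ty.hom _ _ _ = _
          rw [sub_not_var hv2, sub_not_var hv1, hsub,
            lookup_ne (by omega : (2 * m : ℕ) ≠ 2 * m + 1)]
          simp [lookupSub]


end Glob

open Glob in
/-- Familial representability of types in the theory `Glob`: for every `n` and every
derivable context `Γ`, the map `γ ↦ U_n[γ]` is a natural bijection between derivable
substitutions `Γ → S^{n-1}` and derivable types of dimension `n - 1` in `Γ`
(here `SphC n` is the sphere context `S^{n-1}`). -/
theorem glob_types_familially_representable (n : ℕ) (Γ : Ctx) (hΓ : CtxDer Γ) :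
    -- the map is well defined
    (∀ γ : Sub, SubDer Γ γ (SphC n) →
        TyDer Γ ((U n).sub γ) ∧ ((U n).sub γ).dimZ = (n : ℤ) - 1) ∧
    -- it is injective
    (∀ γ γ' : Sub, SubDer Γ γ (SphC n) → SubDer Γ γ' (SphC n) →
        (U n).sub γ = (U n).sub γ' → γ = γ') ∧
    -- it is surjective
    (∀ A : Ty, TyDer Γ A → A.dimZ = (n : ℤ) - 1 →
        ∃ γ : Sub, SubDer Γ γ (SphC n) ∧ (U n).sub γ = A) ∧
    -- and it is natural in `Γ`
    (∀ (Δ : Ctx) (δ γ : Sub), SubDer Δ δ Γ → SubDer Γ γ (SphC n) →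
        ((U n).sub γ).sub δ = (U n).sub (Sub.comp γ δ)) := by
  refine ⟨?_, fun γ γ' => inj_aux n, ?_, ?_⟩
  · intro γ hγ
    refine ⟨ty_sub hγ (sphC_der n).2, ?_⟩
    simp [Ty.dimZ, dimN_sub, dimN_U]
  · intro A hA hd
    refine surj_aux n hΓ hA ?_
    simp only [Ty.dimZ] at hd
    omega
  · intro Δ δ γ hδ hγ
    exact sub_comp δ hγ (vars_subset (sphC_der n).2)
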